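/- Let g : [M]×[K]×[K] → [MK²] be a bijection and let Φ_g denote the induced folding map sending a tensor W ∈ ℝ^{N×M×K×K} to the matrix W' ∈ ℝ^{N×MK²} with W'_{n,i} = w_{n, g⁻¹(i)}. Suppose W' = A'B' for matrices A' ∈ ℝ^{N×R} and B' ∈ ℝ^{R×MK²}. Let A ∈ ℝ^{N×R×1×1} be the tensor with a_{n,r,1,1} = A'_{n,r} and let B = Φ_g⁻¹(B') ∈ ℝ^{R×M×K×K}. Then for every input X ∈ ℝ^{M×J×J}: W ∗₂ X = A ∗₂ (B ∗₂ X), i.e., the convolution by W equals the composition of the K×K convolution by B followed by the 1×1 convolution by A. -/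
import Mathlib


open scoped BigOperators

/-- Zero-padded access to an `M × J × J` feature map at integer spatial indices. -/
noncomputable def pad {M J : ℕ} (X : Fin M → Fin J → Fin J → ℝ) (m : Fin M) (i1 i2 : ℤ) : ℝ :=
  if h : 0 ≤ i1 ∧ i1 < (J : ℤ) ∧ 0 ≤ i2 ∧ i2 < (J : ℤ) then
    X m ⟨i1.toNat, by omega⟩ ⟨i2.toNat, by omega⟩
  else 0

/-- 2D convolution of an `M × J × J` input with an `N × M × K × K` kernel, zero padding,
(0-based version of `y_{n,j1,j2} = Σ w_{n,m,k1,k2} X_{m, j1+k1-(K-1)/2-1, j2+k2-(K-1)/2-1}`). -/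
noncomputable def conv2d {N M K J : ℕ} (W : Fin N → Fin M → Fin K → Fin K → ℝ)
    (X : Fin M → Fin J → Fin J → ℝ) (n : Fin N) (j1 j2 : Fin J) : ℝ :=
  ∑ m, ∑ k1, ∑ k2, W n m k1 k2 *
    pad X m ((j1 : ℤ) + (k1 : ℤ) - ((K : ℤ) - 1) / 2) ((j2 : ℤ) + (k2 : ℤ) - ((K : ℤ) - 1) / 2)

/-- Folding a kernel tensor `W ∈ ℝ^{N×M×K×K}` into a matrix `ℝ^{N×MK²}` along a bijection `g`. -/
def fold {N M K : ℕ} (g : Fin M × Fin K × Fin K ≃ Fin (M * K ^ 2))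
    (W : Fin N → Fin M → Fin K → Fin K → ℝ) : Matrix (Fin N) (Fin (M * K ^ 2)) ℝ :=
  fun n i => W n (g.symm i).1 (g.symm i).2.1 (g.symm i).2.2

/-- Unfolding a matrix `ℝ^{N×MK²}` back into a kernel tensor along a bijection `g`. -/
def unfold {N M K : ℕ} (g : Fin M × Fin K × Fin K ≃ Fin (M * K ^ 2))
    (W' : Matrix (Fin N) (Fin (M * K ^ 2)) ℝ) : Fin N → Fin M → Fin K → Fin K → ℝ :=
  fun n m k1 k2 => W' n (g (m, k1, k2))

lemma sum_swap4 {α β γ δ : Type*} [Fintype α] [Fintype β] [Fintype γ] [Fintype δ]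
    (f : α → β → γ → δ → ℝ) :
    ∑ a, ∑ b, ∑ c, ∑ d, f a b c d = ∑ d, ∑ a, ∑ b, ∑ c, f a b c d :=
  calc ∑ a, ∑ b, ∑ c, ∑ d, f a b c d
      = ∑ a, ∑ b, ∑ d, ∑ c, f a b c d :=
        Finset.sum_congr rfl fun _ _ => Finset.sum_congr rfl fun _ _ => Finset.sum_comm
    _ = ∑ a, ∑ d, ∑ b, ∑ c, f a b c d :=
        Finset.sum_congr rfl fun _ _ => Finset.sum_comm
    _ = ∑ d, ∑ a, ∑ b, ∑ c, f a b c d := Finset.sum_comm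

/-- folding lemma: if the folded matrix factors as `W' = A'B'`, then
convolution by `W` equals the `K×K` convolution by `B = Φ_g⁻¹(B')` followed by the
`1×1` convolution by `A'`. -/
theorem conv2d_factor {N M K J R : ℕ} (hK : Odd K)
    (g : Fin M × Fin K × Fin K ≃ Fin (M * K ^ 2))
    (W : Fin N → Fin M → Fin K → Fin K → ℝ)
    (A' : Matrix (Fin N) (Fin R) ℝ) (B' : Matrix (Fin R) (Fin (M * K ^ 2)) ℝ)
    (hW : fold g W = A' * B') (X : Fin M → Fin J → Fin J → ℝ) :
    conv2d W X
      = conv2d (fun n r (_ : Fin 1) (_ : Fin 1) => A' n r) (conv2d (unfold g B') X) := by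
  funext n j1 j2
  have hpad : ∀ (Y : Fin R → Fin J → Fin J → ℝ) (r : Fin R),
      pad Y r ((j1 : ℤ) + ((0 : Fin 1) : ℤ) - (((1:ℕ) : ℤ) - 1) / 2)
        ((j2 : ℤ) + ((0 : Fin 1) : ℤ) - (((1:ℕ) : ℤ) - 1) / 2) = Y r j1 j2 := by
    intro Y r
    have h1 : (j1 : ℤ) < (J : ℤ) := by exact_mod_cast j1.isLt
    have h2 : (j2 : ℤ) < (J : ℤ) := by exact_mod_cast j2.isLt
    simp only [pad]
    rw [dif_pos (by push_cast; omega)]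
    congr 1 <;> ext <;> simp
  have hW' : ∀ (m : Fin M) (k1 k2 : Fin K),
      W n m k1 k2 = ∑ r, A' n r * B' r (g (m, k1, k2)) := by
    intro m k1 k2
    have := congrFun (congrFun hW n) (g (m, k1, k2))
    simpa [fold, Matrix.mul_apply] using this
  simp only [conv2d, unfold, Fin.sum_univ_one, hpad, hW', Finset.sum_mul, Finset.mul_sum]
  rw [sum_swap4]
  exact Finset.sum_congr rfl fun r _ => Finset.sum_congr rfl fun m _ =>
    Finset.sum_congr rfl fun k1 _ => Finset.sum_congr rfl fun k2 _ => by ring
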